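/- arXiv:2407.05309 — 2 statements merged into one kernel-verified Lean document; each statement's English description precedes it below -/
import Mathlib

section
/- Let μ > 0, D > 0 with D ≠ 1, and α, β, b, G11, G15, G22 be real numbers such that α·G15 ≠ 0 and k := β·G22/(2·sqrt(μ·D)) - b/(μ·(1+sqrt(D))) ≠ 0. Consider the system of equations in real unknowns (C1, C2): (i) 2·sqrt(μ)·C1 = α·(G11 + G15·(C2 + b·C1/((D-1)·μ))^2) and (ii) β·G22·C1/D = 2·(sqrt(μ/D)·C2 + b·C1/((D-1)·sqrt(μ))). Then this system has two distinct real solution pairs (C1, C2) if and only if Δ > 0, where Δ = 4μ - 4α²·G15·G11·(β·G22/(2·sqrt(μ·D)) - b/(μ·(1+sqrt(D))))². -/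
/-!
Equation (ii) is linear in `C2`, and solving it gives `C2 = c·C1` with an explicit slope `c`.
Since `D - 1 = (√D - 1)(√D + 1)`, the shifted amplitude `S = C2 + b·C1/((D-1)μ)` then equals
`k·C1`, so (i) becomes the quadratic `α·G15·k²·C1² - 2√μ·C1 + α·G11 = 0`, which is genuinely
quadratic because `α·G15·k ≠ 0`. Solutions of the system correspond bijectively to roots of this
quadratic, and a real quadratic has exactly two roots iff its discriminant, here `Δ`, is positive.
-/

open Real

def ExactlyTwo {α : Type*} (P : α → Prop) : Prop :=
  ∃ p q, p ≠ q ∧ P p ∧ P q ∧ ∀ r, P r → r = p ∨ r = q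

theorem exactlyTwo_iff_of_graph {α β : Type*} {P : α × β → Prop} {Q : α → Prop} (f : α → β)
    (hPQ : ∀ r, P r ↔ Q r.1 ∧ r.2 = f r.1) : ExactlyTwo P ↔ ExactlyTwo Q := by
  have mk : ∀ x, Q x → P (x, f x) := fun x hx => (hPQ _).2 ⟨hx, rfl⟩
  have eq_mk : ∀ r, P r → r = (r.1, f r.1) := fun r hr => Prod.ext rfl ((hPQ r).1 hr).2
  constructor
  · rintro ⟨p, q, hpq, hp, hq, hall⟩
    refine ⟨p.1, q.1, fun h => hpq ?_, ((hPQ p).1 hp).1, ((hPQ q).1 hq).1, fun x hx => ?_⟩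
    · rw [eq_mk p hp, eq_mk q hq, h]
    · exact (hall _ (mk x hx)).imp (congrArg Prod.fst) (congrArg Prod.fst)
  · rintro ⟨x, y, hxy, hx, hy, hall⟩
    refine ⟨(x, f x), (y, f y), fun h => hxy (congrArg Prod.fst h), mk x hx, mk y hy,
      fun r hr => ?_⟩
    rcases hall r.1 ((hPQ r).1 hr).1 with h | h
    · exact Or.inl (by rw [eq_mk r hr, h])
    · exact Or.inr (by rw [eq_mk r hr, h])

theorem exactlyTwo_quadratic_eq_zero_iff {a b c : ℝ} (ha : a ≠ 0) :
    ExactlyTwo (fun x => a * (x * x) + b * x + c = 0) ↔ 0 < discrim a b c := by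
  constructor
  · rintro ⟨x, y, hxy, hx, hy, -⟩
    by_contra! hle
    have hx' := discrim_eq_sq_of_quadratic_eq_zero hx
    have hy' := discrim_eq_sq_of_quadratic_eq_zero hy
    -- A nonpositive discriminant equal to a square vanishes, which pins down the root.
    have hxb : 2 * a * x + b = 0 := pow_eq_zero_iff two_ne_zero |>.1 <| by
      nlinarith [sq_nonneg (2 * a * x + b)]
    have hyb : 2 * a * y + b = 0 := pow_eq_zero_iff two_ne_zero |>.1 <| by
      nlinarith [sq_nonneg (2 * a * y + b)]
    exact hxy (mul_left_cancel₀ (mul_ne_zero two_ne_zero ha) (by linarith))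
  · intro hpos
    set s := √(discrim a b c)
    have hs : discrim a b c = s * s := (mul_self_sqrt hpos.le).symm
    have hs0 : s ≠ 0 := (sqrt_pos.2 hpos).ne'
    refine ⟨(-b + s) / (2 * a), (-b - s) / (2 * a), ?_, (quadratic_eq_zero_iff ha hs _).2 (.inl rfl),
      (quadratic_eq_zero_iff ha hs _).2 (.inr rfl), fun z hz => (quadratic_eq_zero_iff ha hs z).1 hz⟩
    intro h
    field_simp at h
    exact hs0 (by linarith)

/-- The slope of the line of solutions of equation (ii). -/
noncomputable def pulseSlope (μ D β b G22 : ℝ) : ℝ :=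
  √D / (2 * √μ) * (β * G22 / D - 2 * b / ((D - 1) * √μ))

/-- The constant `k` of the paper. -/
noncomputable def pinningCoeff (μ D β b G22 : ℝ) : ℝ :=
  β * G22 / (2 * √(μ * D)) - b / (μ * (1 + √D))

/-- Equations (i) and (ii) for `r = (C1, C2)`. -/
def PinnedPulseSystem (μ D α β b G11 G15 G22 : ℝ) (r : ℝ × ℝ) : Prop :=
  2 * √μ * r.1 = α * (G11 + G15 * (r.2 + b * r.1 / ((D - 1) * μ)) ^ 2) ∧
    β * G22 * r.1 / D = 2 * (√(μ / D) * r.2 + b * r.1 / ((D - 1) * √μ))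

section PinnedPulse

variable {μ D α β b G11 G15 G22 : ℝ}

theorem eqII_iff_eq_pulseSlope_mul (hμ : 0 < μ) (hD : 0 < D) (hD1 : D ≠ 1) (x y : ℝ) :
    β * G22 * x / D = 2 * (√(μ / D) * y + b * x / ((D - 1) * √μ)) ↔
      y = pulseSlope μ D β b G22 * x := by
  have hs : 0 < √μ := sqrt_pos.2 hμ
  have ht : 0 < √D := sqrt_pos.2 hD
  have hD1' : D - 1 ≠ 0 := sub_ne_zero.2 hD1
  have hfactor : 2 * (√(μ / D) * y + b * x / ((D - 1) * √μ)) - β * G22 * x / D =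
      2 * √μ / √D * (y - pulseSlope μ D β b G22 * x) := by
    rw [sqrt_div hμ.le, pulseSlope]
    field_simp
    ring
  rw [eq_comm, ← sub_eq_zero, hfactor, mul_eq_zero, sub_eq_zero]
  simp only [div_eq_zero_iff, mul_eq_zero, hs.ne', ht.ne', two_ne_zero, or_self, false_or]

theorem pulseSlope_add_eq_pinningCoeff (hμ : 0 < μ) (hD : 0 < D) (hD1 : D ≠ 1) :
    pulseSlope μ D β b G22 + b / ((D - 1) * μ) = pinningCoeff μ D β b G22 := by
  obtain ⟨s, hs, rfl⟩ : ∃ s, 0 < s ∧ μ = s ^ 2 := ⟨√μ, sqrt_pos.2 hμ, (sq_sqrt hμ.le).symm⟩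
  obtain ⟨t, ht, rfl⟩ : ∃ t, 0 < t ∧ D = t ^ 2 := ⟨√D, sqrt_pos.2 hD, (sq_sqrt hD.le).symm⟩
  have hD1' : t ^ 2 - 1 ≠ 0 := sub_ne_zero.2 hD1
  rw [pulseSlope, pinningCoeff, ← mul_pow, sqrt_sq (mul_pos hs ht).le, sqrt_sq hs.le,
    sqrt_sq ht.le]
  field_simp
  ring

theorem pinnedPulseSystem_iff (hμ : 0 < μ) (hD : 0 < D) (hD1 : D ≠ 1) (r : ℝ × ℝ) :
    PinnedPulseSystem μ D α β b G11 G15 G22 r ↔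
      α * G15 * pinningCoeff μ D β b G22 ^ 2 * (r.1 * r.1) + -(2 * √μ) * r.1 + α * G11 = 0 ∧
        r.2 = pulseSlope μ D β b G22 * r.1 := by
  rw [PinnedPulseSystem, eqII_iff_eq_pulseSlope_mul hμ hD hD1, and_congr_left_iff]
  intro hslope
  have hS : r.2 + b * r.1 / ((D - 1) * μ) = pinningCoeff μ D β b G22 * r.1 := by
    rw [hslope, ← pulseSlope_add_eq_pinningCoeff hμ hD hD1]
    ring
  rw [hS]
  constructor <;> intro h <;> linear_combination -h

theorem discrim_pinnedPulse (hμ : 0 < μ) :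
    discrim (α * G15 * pinningCoeff μ D β b G22 ^ 2) (-(2 * √μ)) (α * G11) =
      4 * μ - 4 * α ^ 2 * G15 * G11 * pinningCoeff μ D β b G22 ^ 2 := by
  rw [discrim, neg_sq, mul_pow, sq_sqrt hμ.le]
  ring

end PinnedPulse

theorem pinned_pulse_existence_iff_discriminant_pos_G22
    (μ D α β b G11 G15 G22 : ℝ)
    (hμ : 0 < μ) (hD : 0 < D) (hD1 : D ≠ 1)
    (hne : α * G15 ≠ 0)
    (hk : β * G22 / (2 * Real.sqrt (μ * D)) - b / (μ * (1 + Real.sqrt D)) ≠ 0) :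
    (∃ p q : ℝ × ℝ, p ≠ q ∧
      (2 * Real.sqrt μ * p.1 =
          α * (G11 + G15 * (p.2 + b * p.1 / ((D - 1) * μ)) ^ 2) ∧
        β * G22 * p.1 / D =
          2 * (Real.sqrt (μ / D) * p.2 + b * p.1 / ((D - 1) * Real.sqrt μ))) ∧
      (2 * Real.sqrt μ * q.1 =
          α * (G11 + G15 * (q.2 + b * q.1 / ((D - 1) * μ)) ^ 2) ∧
        β * G22 * q.1 / D =
          2 * (Real.sqrt (μ / D) * q.2 + b * q.1 / ((D - 1) * Real.sqrt μ))) ∧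
      ∀ r : ℝ × ℝ,
        (2 * Real.sqrt μ * r.1 =
            α * (G11 + G15 * (r.2 + b * r.1 / ((D - 1) * μ)) ^ 2) ∧
          β * G22 * r.1 / D =
            2 * (Real.sqrt (μ / D) * r.2 + b * r.1 / ((D - 1) * Real.sqrt μ))) →
        r = p ∨ r = q) ↔
    0 < 4 * μ - 4 * α ^ 2 * G15 * G11 *
        (β * G22 / (2 * Real.sqrt (μ * D)) - b / (μ * (1 + Real.sqrt D))) ^ 2 := by
  show ExactlyTwo (PinnedPulseSystem μ D α β b G11 G15 G22) ↔
    0 < 4 * μ - 4 * α ^ 2 * G15 * G11 * pinningCoeff μ D β b G22 ^ 2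
  have hA : α * G15 * pinningCoeff μ D β b G22 ^ 2 ≠ 0 := mul_ne_zero hne (pow_ne_zero 2 hk)
  rw [exactlyTwo_iff_of_graph (Q := fun x => _ * (x * x) + _ * x + _ = 0) _
      (pinnedPulseSystem_iff hμ hD hD1),
    exactlyTwo_quadratic_eq_zero_iff hA, discrim_pinnedPulse hμ]
end

section
/- Let D > 0 with D ≠ 1, let α, β, b, G15, G22, S be real numbers with α·G15·S ≠ 0, and let t be a nonzero complex number. Then the linear system in complex unknowns (C3, C4): 2t·C3 = 2α·G15·S·(C4 + b·C3/((D-1)·t^2)) and (β·G22/D)·C3 = 2·(t·C4/sqrt(D) + b·C3/((D-1)·t)) has a solution (C3, C4) ≠ (0, 0) if and only if t^3 + B1·t + E1 = 0, where B1 = -α·β·G15·G22·S/(2·sqrt(D)) and E1 = α·b·G15·S/(1+sqrt(D)). -/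
/-!
The two matching conditions form a homogeneous linear system in `(C3, C4)`, which has a
nontrivial solution exactly when its determinant vanishes. Writing `s = √D`, so that
`D - 1 = (s - 1)(s + 1)`, that determinant is `-2 / (s t)` times the depressed cubic.
-/

theorem exists_ne_zero_linear_system_iff {R : Type*} [CommRing R] [IsDomain R] (a b c d : R) :
    (∃ x y : R, (x, y) ≠ (0, 0) ∧ a * x + b * y = 0 ∧ c * x + d * y = 0) ↔
      a * d - b * c = 0 := by
  rw [← Matrix.det_fin_two_of, ← Matrix.exists_mulVec_eq_zero_iff,
    (finTwoArrowEquiv R).exists_congr_left]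
  simp [funext_iff, Fin.forall_fin_two, mul_comm]

section MatchingSystem

variable {K : Type*} [Field K] [NeZero (2 : K)]

theorem matching_det_eq (α β b G15 G22 S D s t : K) (hsD : s ^ 2 = D) (hs : s ≠ 0)
    (hD1 : D ≠ 1) (ht : t ≠ 0) :
    (t - α * G15 * S * b / ((D - 1) * t ^ 2)) * (-2 * t / s) -
        (-(α * G15 * S)) * (β * G22 / D - 2 * b / ((D - 1) * t)) =
      -2 / (s * t) * (t ^ 3 + (-(α * β * G15 * G22 * S) / (2 * s)) * t +
        α * b * G15 * S / (1 + s)) := by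
  subst hsD
  have hs1 : 1 + s ≠ 0 := fun h => hD1 (by linear_combination (s - 1) * h)
  have hD1' : s ^ 2 - 1 ≠ 0 := sub_ne_zero.2 hD1
  field_simp
  ring

theorem exists_matching_solution_iff (α β b G15 G22 S D s t : K) (hsD : s ^ 2 = D)
    (hs : s ≠ 0) (hD1 : D ≠ 1) (ht : t ≠ 0) :
    (∃ C3 C4 : K, (C3, C4) ≠ (0, 0) ∧
      2 * t * C3 = 2 * α * G15 * S * (C4 + b * C3 / ((D - 1) * t ^ 2)) ∧
      (β * G22 / D) * C3 = 2 * (t * C4 / s + b * C3 / ((D - 1) * t))) ↔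
    t ^ 3 + (-(α * β * G15 * G22 * S) / (2 * s)) * t + α * b * G15 * S / (1 + s) = 0 := by
  have hst : -2 / (s * t) ≠ 0 := div_ne_zero (neg_ne_zero.2 two_ne_zero) (mul_ne_zero hs ht)
  rw [← mul_eq_zero_iff_left hst, ← matching_det_eq α β b G15 G22 S D s t hsD hs hD1 ht,
    ← exists_ne_zero_linear_system_iff]
  refine exists₂_congr fun C3 C4 => and_congr_right' (and_congr ?_ ?_)
  · exact ⟨fun h => mul_left_cancel₀ two_ne_zero (by linear_combination h),
      fun h => by linear_combination 2 * h⟩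
  · exact ⟨fun h => by linear_combination h, fun h => by linear_combination h⟩

end MatchingSystem

theorem eigenvalue_matching_iff_depressed_cubic_general
    (D α β b G15 G22 S : ℝ) (hD : 0 < D) (hD1 : D ≠ 1)
    (t : ℂ) (ht : t ≠ 0)
    (B1 E1 : ℝ)
    (hB1 : B1 = -(α * β * G15 * G22 * S) / (2 * Real.sqrt D))
    (hE1 : E1 = α * b * G15 * S / (1 + Real.sqrt D)) :
    (∃ C3 C4 : ℂ, (C3, C4) ≠ (0, 0) ∧
      2 * t * C3 =
        2 * (α : ℂ) * (G15 : ℂ) * (S : ℂ) *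
          (C4 + (b : ℂ) * C3 / (((D : ℂ) - 1) * t ^ 2)) ∧
      ((β : ℂ) * (G22 : ℂ) / (D : ℂ)) * C3 =
        2 * (t * C4 / (Real.sqrt D : ℂ) + (b : ℂ) * C3 / (((D : ℂ) - 1) * t))) ↔
    t ^ 3 + (B1 : ℂ) * t + (E1 : ℂ) = 0 := by
  subst hB1 hE1
  push_cast
  refine exists_matching_solution_iff _ _ _ _ _ _ _ _ t ?_ ?_ ?_ ht
  · exact_mod_cast Real.sq_sqrt hD.le
  · exact_mod_cast (Real.sqrt_pos.2 hD).ne'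
  · exact_mod_cast hD1

theorem eigenvalue_matching_iff_depressed_cubic
    (D α β b G15 G22 S : ℝ) (hD : 0 < D) (hD1 : D ≠ 1)
    (hne : α * G15 * S ≠ 0) (t : ℂ) (ht : t ≠ 0)
    (B1 E1 : ℝ)
    (hB1 : B1 = -(α * β * G15 * G22 * S) / (2 * Real.sqrt D))
    (hE1 : E1 = α * b * G15 * S / (1 + Real.sqrt D)) :
    (∃ C3 C4 : ℂ, (C3, C4) ≠ (0, 0) ∧
      2 * t * C3 =
        2 * (α : ℂ) * (G15 : ℂ) * (S : ℂ) *
          (C4 + (b : ℂ) * C3 / (((D : ℂ) - 1) * t ^ 2)) ∧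
      ((β : ℂ) * (G22 : ℂ) / (D : ℂ)) * C3 =
        2 * (t * C4 / (Real.sqrt D : ℂ) + (b : ℂ) * C3 / (((D : ℂ) - 1) * t))) ↔
    t ^ 3 + (B1 : ℂ) * t + (E1 : ℂ) = 0 :=
  eigenvalue_matching_iff_depressed_cubic_general D α β b G15 G22 S hD hD1 t ht B1 E1 hB1 hE1
end
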